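/- arXiv:2207.11604 — 2 statements merged into one kernel-verified Lean document; each statement's English description precedes it below -/
import Mathlib

section
/- Let K ≥ 1, T > 0, δ_1, …, δ_K ≥ 0, and let ξ : [0,T] → ℝ^K be continuous. Define the map Λ on the space of continuous functions Y : [0,T] → ℝ^K by Λ(Y)_i(t) = ξ_i(t) − ∫₀ᵗ δ_i Y_i(s) ds − R_Y(t), where R_Y(t) = min_{1≤j≤K} ( ξ_j(t) − ∫₀ᵗ δ_j Y_j(s) ds ). Then for any two continuous Y⁽¹⁾, Y⁽²⁾ : [0,T] → ℝ^K, sup_{t∈[0,T]} ‖Λ(Y⁽¹⁾)(t) − Λ(Y⁽²⁾)(t)‖ ≤ (1+K)·√K·(max_{1≤j≤K} δ_j)·T · sup_{t∈[0,T]} ‖Y⁽¹⁾(t) − Y⁽²⁾(t)‖, where ‖·‖ is the Euclidean norm on ℝ^K. -/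
open MeasureTheory

/-- The map `Λ` defining the coupled integral equation. -/
noncomputable def couplingMap (K : ℕ) (hK : 0 < K) (δ : Fin K → ℝ)
    (ξ Y : ℝ → Fin K → ℝ) : ℝ → Fin K → ℝ := fun t i =>
  ξ t i - (∫ s in (0 : ℝ)..t, δ i * Y s i) -
    Finset.univ.inf' (Finset.univ_nonempty_iff.mpr (Fin.pos_iff_nonempty.mp hK))
      (fun j => ξ t j - ∫ s in (0 : ℝ)..t, δ j * Y s j)

/-! The forcing term `ξ` cancels in `Λ(Y₁) - Λ(Y₂)`. Each coordinate is then the difference of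
the integral terms minus the difference of their minima; a finite minimum is 1-Lipschitz for the
sup norm, so both are at most `(max δ) T ‖Y₁ - Y₂‖∞`. Hence the Euclidean norm is at most
`2 √K (max δ) T ‖Y₁ - Y₂‖∞ ≤ (1 + K) √K (max δ) T ‖Y₁ - Y₂‖∞`. -/

open Set

theorem Finset.abs_inf'_sub_inf'_le {ι : Type*} {s : Finset ι} (hs : s.Nonempty)
    {f g : ι → ℝ} {B : ℝ} (h : ∀ j ∈ s, |f j - g j| ≤ B) :
    |s.inf' hs f - s.inf' hs g| ≤ B := by
  rw [abs_sub_le_iff]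
  constructor
  · obtain ⟨j, hj, hgj⟩ := s.exists_mem_eq_inf' hs g
    linarith [s.inf'_le f hj, (abs_sub_le_iff.mp (h j hj)).1]
  · obtain ⟨j, hj, hfj⟩ := s.exists_mem_eq_inf' hs f
    linarith [s.inf'_le g hj, (abs_sub_le_iff.mp (h j hj)).2]

theorem Finset.abs_sub_inf'_sub_sub_inf'_le {ι : Type*} {s : Finset ι} (hs : s.Nonempty)
    {f g : ι → ℝ} {B : ℝ} (h : ∀ j ∈ s, |f j - g j| ≤ B) {i : ι} (hi : i ∈ s) :
    |(f i - s.inf' hs f) - (g i - s.inf' hs g)| ≤ 2 * B :=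
  calc |(f i - s.inf' hs f) - (g i - s.inf' hs g)|
      = |(f i - g i) - (s.inf' hs f - s.inf' hs g)| := by ring_nf
    _ ≤ |f i - g i| + |s.inf' hs f - s.inf' hs g| := abs_sub _ _
    _ ≤ 2 * B := by linarith [h i hi, s.abs_inf'_sub_inf'_le hs h]

theorem abs_le_sqrt_sum_sq {ι : Type*} [Fintype ι] (f : ι → ℝ) (j : ι) :
    |f j| ≤ √(∑ i, f i ^ 2) :=
  Real.abs_le_sqrt <| Finset.single_le_sum (fun i _ => sq_nonneg (f i)) (Finset.mem_univ j)

theorem sqrt_sum_sq_le_of_abs_le {ι : Type*} [Fintype ι] {f : ι → ℝ} {B : ℝ} (hB : 0 ≤ B)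
    (h : ∀ i, |f i| ≤ B) : √(∑ i, f i ^ 2) ≤ √(Fintype.card ι) * B :=
  calc √(∑ i, f i ^ 2) ≤ √(∑ _i : ι, B ^ 2) :=
        Real.sqrt_le_sqrt <| Finset.sum_le_sum fun i _ =>
          sq_le_sq' (neg_le_of_abs_le (h i)) (le_of_abs_le (h i))
    _ = √(Fintype.card ι) * B := by
        rw [Finset.sum_const, Finset.card_univ, nsmul_eq_mul, Real.sqrt_mul (Nat.cast_nonneg _),
          Real.sqrt_sq hB]

theorem IsCompact.le_iSup_of_continuousOn {X : Type*} [TopologicalSpace X] {s : Set X}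
    (hs : IsCompact s) {f : X → ℝ} (hf : ContinuousOn f s) {x : X} (hx : x ∈ s) :
    f x ≤ ⨆ y : s, f y :=
  haveI := isCompact_iff_compactSpace.mp hs
  le_ciSup (isCompact_range hf.domRestrict).bddAbove ⟨x, hx⟩

theorem abs_integral_const_mul_sub_le {f g : ℝ → ℝ} {a b M : ℝ} (c : ℝ)
    (hf : IntervalIntegrable f volume a b) (hg : IntervalIntegrable g volume a b)
    (h : ∀ s ∈ uIoc a b, |f s - g s| ≤ M) :
    |(∫ s in a..b, c * f s) - ∫ s in a..b, c * g s| ≤ |c| * M * |b - a| := by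
  rw [intervalIntegral.integral_const_mul, intervalIntegral.integral_const_mul, ← mul_sub,
    ← intervalIntegral.integral_sub hf hg, abs_mul, mul_assoc]
  gcongr
  exact intervalIntegral.norm_integral_le_of_norm_le_const (f := fun s => f s - g s) h

theorem stmt_5_general (K : ℕ) (hK : 0 < K) (T : ℝ) (hT : 0 < T)
    (δ : Fin K → ℝ) (hδ : ∀ j, 0 ≤ δ j)
    (ξ Y₁ Y₂ : ℝ → Fin K → ℝ)
    (hY₁ : ∀ j, ContinuousOn (fun t => Y₁ t j) (Set.Icc 0 T))
    (hY₂ : ∀ j, ContinuousOn (fun t => Y₂ t j) (Set.Icc 0 T)) :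
    (⨆ t : Set.Icc (0 : ℝ) T,
        Real.sqrt (∑ i, (couplingMap K hK δ ξ Y₁ (t : ℝ) i -
          couplingMap K hK δ ξ Y₂ (t : ℝ) i) ^ 2)) ≤
      (1 + (K : ℝ)) * Real.sqrt K *
        (Finset.univ.sup' (Finset.univ_nonempty_iff.mpr (Fin.pos_iff_nonempty.mp hK)) δ) * T *
      ⨆ t : Set.Icc (0 : ℝ) T,
        Real.sqrt (∑ i, (Y₁ (t : ℝ) i - Y₂ (t : ℝ) i) ^ 2) := by
  set C := Finset.univ.sup' (Finset.univ_nonempty_iff.mpr (Fin.pos_iff_nonempty.mp hK)) δ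
  set M := ⨆ t : Set.Icc (0 : ℝ) T, √(∑ i, (Y₁ (t : ℝ) i - Y₂ (t : ℝ) i) ^ 2)
  have hM : ∀ t ∈ Icc 0 T, ∀ j, |Y₁ t j - Y₂ t j| ≤ M := fun t ht j =>
    (abs_le_sqrt_sum_sq (fun i => Y₁ t i - Y₂ t i) j).trans <|
      isCompact_Icc.le_iSup_of_continuousOn
        (f := fun t => √(∑ i, (Y₁ t i - Y₂ t i) ^ 2)) (by fun_prop) ht
  have hM0 : 0 ≤ M := (abs_nonneg _).trans (hM 0 ⟨le_rfl, hT.le⟩ ⟨0, hK⟩)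
  have hC0 : 0 ≤ C := (hδ _).trans (Finset.le_sup' δ (Finset.mem_univ ⟨0, hK⟩))
  have hint : ∀ t ∈ Icc 0 T, ∀ j, |(ξ t j - ∫ s in (0 : ℝ)..t, δ j * Y₁ s j) -
      (ξ t j - ∫ s in (0 : ℝ)..t, δ j * Y₂ s j)| ≤ C * M * T := by
    intro t ht j
    have hsub : uIcc 0 t ⊆ Icc 0 T := by
      rw [uIcc_of_le ht.1]
      exact Icc_subset_Icc_right ht.2
    rw [sub_sub_sub_cancel_left, abs_sub_comm]
    calc _ ≤ |δ j| * M * |t - 0| :=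
          abs_integral_const_mul_sub_le (δ j) ((hY₁ j).mono hsub).intervalIntegrable
            ((hY₂ j).mono hsub).intervalIntegrable
            fun s hs => hM s (hsub (uIoc_subset_uIcc hs)) j
      _ = δ j * M * t := by rw [abs_of_nonneg (hδ j), sub_zero, abs_of_nonneg ht.1]
      _ ≤ C * M * T := by
          gcongr
          exacts [ht.1, Finset.le_sup' δ (Finset.mem_univ j), ht.2]
  have : Nonempty (Icc (0 : ℝ) T) := ⟨⟨0, le_rfl, hT.le⟩⟩
  refine ciSup_le fun ⟨t, ht⟩ => ?_
  calc √(∑ i, (couplingMap K hK δ ξ Y₁ t i - couplingMap K hK δ ξ Y₂ t i) ^ 2)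
      ≤ √(Fintype.card (Fin K)) * (2 * (C * M * T)) :=
        sqrt_sum_sq_le_of_abs_le (by positivity) fun i =>
          Finset.abs_sub_inf'_sub_sub_inf'_le _ (fun j _ => hint t ht j) (Finset.mem_univ i)
    _ = 2 * (√K * C * T * M) := by rw [Fintype.card_fin]; ring
    _ ≤ (1 + K) * (√K * C * T * M) := by
        gcongr
        linarith [(Nat.one_le_cast (α := ℝ)).mpr hK]
    _ = (1 + K) * √K * C * T * M := by ring

theorem stmt_5 (K : ℕ) (hK : 0 < K) (T : ℝ) (hT : 0 < T)
    (δ : Fin K → ℝ) (hδ : ∀ j, 0 ≤ δ j)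
    (ξ Y₁ Y₂ : ℝ → Fin K → ℝ)
    (hξ : ∀ j, ContinuousOn (fun t => ξ t j) (Set.Icc 0 T))
    (hY₁ : ∀ j, ContinuousOn (fun t => Y₁ t j) (Set.Icc 0 T))
    (hY₂ : ∀ j, ContinuousOn (fun t => Y₂ t j) (Set.Icc 0 T)) :
    (⨆ t : Set.Icc (0 : ℝ) T,
        Real.sqrt (∑ i, (couplingMap K hK δ ξ Y₁ (t : ℝ) i -
          couplingMap K hK δ ξ Y₂ (t : ℝ) i) ^ 2)) ≤
      (1 + (K : ℝ)) * Real.sqrt K *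
        (Finset.univ.sup' (Finset.univ_nonempty_iff.mpr (Fin.pos_iff_nonempty.mp hK)) δ) * T *
      ⨆ t : Set.Icc (0 : ℝ) T,
        Real.sqrt (∑ i, (Y₁ (t : ℝ) i - Y₂ (t : ℝ) i) ^ 2) :=
  stmt_5_general K hK T hT δ hδ ξ Y₁ Y₂ hY₁ hY₂
end

section
/- Let K ≥ 1, T > 0, δ_1, …, δ_K ≥ 0 with c₀ := max_j δ_j, and let ξⁿ, ξ : [0,T] → ℝ^K be continuous. Let Xⁿ and X be the unique continuous solutions of the coupled equation X_i(t) = η_i(t) − ∫₀ᵗ δ_i X_i(s) ds − min_{1≤j≤K}( η_j(t) − ∫₀ᵗ δ_j X_j(s) ds ) with inputs η = ξⁿ and η = ξ respectively. Then for all t ∈ [0,T], ‖Xⁿ(t) − X(t)‖ ≤ (1+K)√K · (sup_{s∈[0,T]} ‖ξⁿ(s) − ξ(s)‖) · exp((1+K)√K c₀ t). In particular, the solution map ξ ↦ X is continuous in the uniform norm. -/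
open MeasureTheory Set

lemma my_gronwall {g : ℝ → ℝ} {T a b : ℝ}
    (hg : ContinuousOn g (Set.Icc 0 T)) (hg0 : ∀ t, 0 ≤ g t)
    (ha : 0 ≤ a) (hb : 0 ≤ b)
    (hbound : ∀ t ∈ Set.Icc (0:ℝ) T, g t ≤ a + b * ∫ s in (0:ℝ)..t, g s) :
    ∀ t ∈ Set.Icc (0:ℝ) T, g t ≤ a * Real.exp (b * t) := by
  intro t ht
  have hT0 : (0:ℝ) ≤ T := ht.1.trans ht.2
  set F : ℝ → ℝ := fun x => ∫ s in (0:ℝ)..x, g s with hF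
  have hgint : ∀ x ∈ Icc (0:ℝ) T, IntervalIntegrable g volume 0 x := fun x hx =>
    (hg.mono (Icc_subset_Icc le_rfl hx.2)).intervalIntegrable_of_Icc hx.1
  have hFcont : ContinuousOn F (Icc 0 T) := by
    have h1 : IntegrableOn g (Icc 0 T) volume := hg.integrableOn_Icc
    have := intervalIntegral.continuousOn_primitive (f := g) (a := 0) (b := T) (μ := volume) h1
    refine this.congr fun x hx => ?_
    simp only [hF]
    rw [intervalIntegral.integral_of_le hx.1]
  have hF' : ∀ x ∈ Ico (0:ℝ) T, HasDerivWithinAt F (g x) (Ici x) x := by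
    intro x hx
    have hmem : Ioo x T ∈ nhdsWithin x (Ioi x) :=
      Ioo_mem_nhdsGT_of_mem ⟨le_rfl, hx.2⟩
    have hmeas : StronglyMeasurableAtFilter g (nhdsWithin x (Ioi x)) volume := by
      refine ⟨Ioo x T, hmem, ?_⟩
      exact (hg.mono (fun y hy => ⟨hx.1.trans hy.1.le, hy.2.le⟩)).aestronglyMeasurable
        measurableSet_Ioo
    have hcw : ContinuousWithinAt g (Ioi x) x := by
      have := (hg x ⟨hx.1, hx.2.le⟩)
      exact this.mono_of_mem_nhdsWithin
        (Filter.mem_of_superset hmem (fun y hy => ⟨hx.1.trans hy.1.le, hy.2.le⟩))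
    exact intervalIntegral.integral_hasDerivWithinAt_right (hgint x ⟨hx.1, hx.2.le⟩) hmeas hcw
  have key := norm_le_gronwallBound_of_norm_deriv_right_le (f := F) (f' := g)
    (δ := 0) (K := b) (ε := a) (a := 0) (b := T) hFcont hF'
    (by simp [hF]) ?_ t ht
  · have hFnn : 0 ≤ F t := intervalIntegral.integral_nonneg ht.1 (fun s _ => hg0 s)
    have hFle : F t ≤ gronwallBound 0 b a (t - 0) := le_trans (le_abs_self _) key
    rcases eq_or_lt_of_le hb with hb0 | hb0
    · have h1 : g t ≤ a := by
        have := hbound t ht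
        rw [← hb0] at this
        simpa using this
      calc g t ≤ a := h1
        _ ≤ a * Real.exp (b * t) := by
            nlinarith [Real.one_le_exp (mul_nonneg hb ht.1)]
    · have hBb : gronwallBound 0 b a (t - 0) = a / b * (Real.exp (b * t) - 1) := by
        rw [gronwallBound_of_K_ne_0 hb0.ne']
        simp
      calc g t ≤ a + b * F t := hbound t ht
        _ ≤ a + b * (a / b * (Real.exp (b * t) - 1)) := by nlinarith [hBb ▸ hFle]
        _ = a * Real.exp (b * t) := by field_simp; ring
  · intro x hx
    have hFnn : 0 ≤ F x := intervalIntegral.integral_nonneg hx.1 (fun s _ => hg0 s)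
    have := hbound x ⟨hx.1, hx.2.le⟩
    rw [Real.norm_eq_abs, Real.norm_eq_abs, abs_of_nonneg (hg0 x), abs_of_nonneg hFnn]
    linarith

lemma my_abs_inf'_sub_inf'_le {K : ℕ} (H : (Finset.univ : Finset (Fin K)).Nonempty)
    (f g : Fin K → ℝ) {B : ℝ} (h : ∀ j, |f j - g j| ≤ B) :
    |Finset.univ.inf' H f - Finset.univ.inf' H g| ≤ B := by
  obtain ⟨j₁, -, hj₁⟩ := Finset.exists_mem_eq_inf' H f
  obtain ⟨j₂, -, hj₂⟩ := Finset.exists_mem_eq_inf' H g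
  rw [abs_sub_le_iff]
  constructor
  · rw [hj₂]
    calc Finset.univ.inf' H f - g j₂ ≤ f j₂ - g j₂ := by
          have := Finset.inf'_le f (Finset.mem_univ j₂); linarith
      _ ≤ B := (abs_le.mp (h j₂)).2
  · rw [hj₁]
    calc Finset.univ.inf' H g - f j₁ ≤ g j₁ - f j₁ := by
          have := Finset.inf'_le g (Finset.mem_univ j₁); linarith
      _ ≤ B := by have := (abs_le.mp (h j₁)).1; linarith

lemma my_abs_le_sqrt_sum {K : ℕ} (x : Fin K → ℝ) (i : Fin K) :
    |x i| ≤ Real.sqrt (∑ j, x j ^ 2) := by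
  rw [← Real.sqrt_sq_eq_abs (x i)]
  exact Real.sqrt_le_sqrt (Finset.single_le_sum (fun j _ => sq_nonneg (x j))
    (Finset.mem_univ i))

theorem stmt_8 (K : ℕ) (hK : 0 < K) (T : ℝ) (hT : 0 < T)
    (δ : Fin K → ℝ) (hδ : ∀ j, 0 ≤ δ j) (c₀ : ℝ)
    (hc₀ : c₀ = Finset.univ.sup' (Finset.univ_nonempty_iff.mpr (Fin.pos_iff_nonempty.mp hK)) δ)
    (ξn ξ Xn X : ℝ → Fin K → ℝ)
    (hξn : ∀ j, ContinuousOn (fun t => ξn t j) (Set.Icc 0 T))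
    (hξ : ∀ j, ContinuousOn (fun t => ξ t j) (Set.Icc 0 T))
    (hXncont : ∀ i, ContinuousOn (fun t => Xn t i) (Set.Icc 0 T))
    (hXcont : ∀ i, ContinuousOn (fun t => X t i) (Set.Icc 0 T))
    (hXneq : ∀ t ∈ Set.Icc (0 : ℝ) T, ∀ i,
      Xn t i = ξn t i - (∫ s in (0 : ℝ)..t, δ i * Xn s i) -
        Finset.univ.inf' (Finset.univ_nonempty_iff.mpr (Fin.pos_iff_nonempty.mp hK))
          (fun j => ξn t j - ∫ s in (0 : ℝ)..t, δ j * Xn s j))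
    (hXeq : ∀ t ∈ Set.Icc (0 : ℝ) T, ∀ i,
      X t i = ξ t i - (∫ s in (0 : ℝ)..t, δ i * X s i) -
        Finset.univ.inf' (Finset.univ_nonempty_iff.mpr (Fin.pos_iff_nonempty.mp hK))
          (fun j => ξ t j - ∫ s in (0 : ℝ)..t, δ j * X s j)) :
    ∀ t ∈ Set.Icc (0 : ℝ) T,
      Real.sqrt (∑ i, (Xn t i - X t i) ^ 2) ≤
        (1 + (K : ℝ)) * Real.sqrt K *
          (⨆ s : Set.Icc (0 : ℝ) T, Real.sqrt (∑ i, (ξn (s : ℝ) i - ξ (s : ℝ) i) ^ 2)) *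
          Real.exp ((1 + (K : ℝ)) * Real.sqrt K * c₀ * t) := by
  have H : (Finset.univ : Finset (Fin K)).Nonempty :=
    Finset.univ_nonempty_iff.mpr (Fin.pos_iff_nonempty.mp hK)
  set A : ℝ := (1 + (K : ℝ)) * Real.sqrt K with hA
  set g : ℝ → ℝ := fun t => Real.sqrt (∑ i, (Xn t i - X t i) ^ 2) with hg
  set gξ : ℝ → ℝ := fun t => Real.sqrt (∑ i, (ξn t i - ξ t i) ^ 2) with hgξ
  set M : ℝ := ⨆ s : Set.Icc (0 : ℝ) T, Real.sqrt (∑ i, (ξn (s : ℝ) i - ξ (s : ℝ) i) ^ 2)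
    with hM
  -- basic positivity facts
  have hK1 : (1 : ℝ) ≤ K := by exact_mod_cast hK
  have hsK0 : 0 ≤ Real.sqrt K := Real.sqrt_nonneg _
  have h2A : 2 * Real.sqrt K ≤ A := by
    rw [hA]; nlinarith
  have hA0 : 0 ≤ A := by rw [hA]; positivity
  have hc00 : 0 ≤ c₀ := by
    rw [hc₀]
    exact le_trans (hδ ⟨0, hK⟩) (Finset.le_sup' δ (Finset.mem_univ _))
  have hδc : ∀ j, δ j ≤ c₀ := fun j => hc₀ ▸ Finset.le_sup' δ (Finset.mem_univ j)
  -- continuity of g and gξ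
  have hgcont : ContinuousOn g (Icc 0 T) := by
    apply Real.continuous_sqrt.comp_continuousOn
    exact continuousOn_finset_sum _ (fun i _ => ((hXncont i).sub (hXcont i)).pow 2)
  have hgξcont : ContinuousOn gξ (Icc 0 T) := by
    apply Real.continuous_sqrt.comp_continuousOn
    exact continuousOn_finset_sum _ (fun i _ => ((hξn i).sub (hξ i)).pow 2)
  have hg0 : ∀ t, 0 ≤ g t := fun t => Real.sqrt_nonneg _
  -- M bounds
  have hne : (Icc (0:ℝ) T).Nonempty := ⟨0, le_rfl, hT.le⟩
  obtain ⟨x₀, hx₀, hx₀max⟩ := isCompact_Icc.exists_isMaxOn hne hgξcont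
  have hMbdd : BddAbove (Set.range fun s : Set.Icc (0:ℝ) T =>
      Real.sqrt (∑ i, (ξn (s : ℝ) i - ξ (s : ℝ) i) ^ 2)) := by
    refine ⟨gξ x₀, ?_⟩
    rintro y ⟨s, rfl⟩
    exact hx₀max s.2
  have hMle : ∀ s ∈ Icc (0:ℝ) T, gξ s ≤ M := by
    intro s hs
    exact le_ciSup hMbdd (⟨s, hs⟩ : Set.Icc (0:ℝ) T)
  have hM0 : 0 ≤ M := le_trans (Real.sqrt_nonneg _) (hMle 0 ⟨le_rfl, hT.le⟩)
  -- key pointwise bound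
  have hbound : ∀ t ∈ Icc (0:ℝ) T, g t ≤ A * M + A * c₀ * ∫ s in (0:ℝ)..t, g s := by
    intro t ht
    set I : ℝ := ∫ s in (0:ℝ)..t, g s with hI
    have hgint : IntervalIntegrable g volume 0 t :=
      (hgcont.mono (Icc_subset_Icc le_rfl ht.2)).intervalIntegrable_of_Icc ht.1
    have hI0 : 0 ≤ I := intervalIntegral.integral_nonneg ht.1 (fun s _ => hg0 s)
    have hXnint : ∀ j, IntervalIntegrable (fun s => Xn s j) volume 0 t := fun j =>
      ((hXncont j).mono (Icc_subset_Icc le_rfl ht.2)).intervalIntegrable_of_Icc ht.1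
    have hXint : ∀ j, IntervalIntegrable (fun s => X s j) volume 0 t := fun j =>
      ((hXcont j).mono (Icc_subset_Icc le_rfl ht.2)).intervalIntegrable_of_Icc ht.1
    have hIdiff : ∀ j, |(∫ s in (0:ℝ)..t, δ j * Xn s j) - ∫ s in (0:ℝ)..t, δ j * X s j|
        ≤ c₀ * I := by
      intro j
      have hsub : (∫ s in (0:ℝ)..t, δ j * Xn s j) - ∫ s in (0:ℝ)..t, δ j * X s j
          = ∫ s in (0:ℝ)..t, δ j * (Xn s j - X s j) := by
        rw [← intervalIntegral.integral_sub ((hXnint j).const_mul _) ((hXint j).const_mul _)]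
        congr 1; ext s; ring
      rw [hsub]
      have habs : |∫ s in (0:ℝ)..t, δ j * (Xn s j - X s j)|
          ≤ ∫ s in (0:ℝ)..t, |δ j * (Xn s j - X s j)| :=
        intervalIntegral.abs_integral_le_integral_abs ht.1
      have hintd : IntervalIntegrable (fun s => δ j * (Xn s j - X s j)) volume 0 t :=
        ((hXnint j).sub (hXint j)).const_mul _
      have hmono : (∫ s in (0:ℝ)..t, |δ j * (Xn s j - X s j)|)
          ≤ ∫ s in (0:ℝ)..t, c₀ * g s := by
        apply intervalIntegral.integral_mono_on ht.1 hintd.abs (hgint.const_mul _)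
        intro s hs
        have hsT : s ∈ Icc (0:ℝ) T := ⟨hs.1, hs.2.trans ht.2⟩
        have h1 : |Xn s j - X s j| ≤ g s :=
          my_abs_le_sqrt_sum (fun i => Xn s i - X s i) j
        rw [abs_mul, abs_of_nonneg (hδ j)]
        have := hδc j
        nlinarith [abs_nonneg (Xn s j - X s j), hg0 s]
      calc |∫ s in (0:ℝ)..t, δ j * (Xn s j - X s j)|
          ≤ ∫ s in (0:ℝ)..t, c₀ * g s := habs.trans hmono
        _ = c₀ * I := by rw [hI, intervalIntegral.integral_const_mul]
    have hξle : ∀ j, |ξn t j - ξ t j| ≤ M :=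
      fun j => (my_abs_le_sqrt_sum (fun i => ξn t i - ξ t i) j).trans (hMle t ht)
    -- bound each coordinate
    have hDb : ∀ i, |Xn t i - X t i| ≤ 2 * M + 2 * (c₀ * I) := by
      intro i
      have hinf : |Finset.univ.inf' H (fun j => ξn t j - ∫ s in (0:ℝ)..t, δ j * Xn s j)
          - Finset.univ.inf' H (fun j => ξ t j - ∫ s in (0:ℝ)..t, δ j * X s j)|
          ≤ M + c₀ * I := by
        apply my_abs_inf'_sub_inf'_le H
        intro j
        have h1 := hξle j
        have h2 := hIdiff j
        have : (ξn t j - ∫ s in (0:ℝ)..t, δ j * Xn s j)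
            - (ξ t j - ∫ s in (0:ℝ)..t, δ j * X s j)
            = (ξn t j - ξ t j) -
              ((∫ s in (0:ℝ)..t, δ j * Xn s j) - ∫ s in (0:ℝ)..t, δ j * X s j) := by ring
        rw [this]
        calc |(ξn t j - ξ t j) -
              ((∫ s in (0:ℝ)..t, δ j * Xn s j) - ∫ s in (0:ℝ)..t, δ j * X s j)|
            ≤ |ξn t j - ξ t j| +
              |(∫ s in (0:ℝ)..t, δ j * Xn s j) - ∫ s in (0:ℝ)..t, δ j * X s j| :=
            abs_sub _ _
          _ ≤ M + c₀ * I := add_le_add h1 h2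
      rw [hXneq t ht i, hXeq t ht i]
      have hre : (ξn t i - (∫ s in (0:ℝ)..t, δ i * Xn s i) -
            Finset.univ.inf' H (fun j => ξn t j - ∫ s in (0:ℝ)..t, δ j * Xn s j))
          - (ξ t i - (∫ s in (0:ℝ)..t, δ i * X s i) -
            Finset.univ.inf' H (fun j => ξ t j - ∫ s in (0:ℝ)..t, δ j * X s j))
          = ((ξn t i - ξ t i) -
              ((∫ s in (0:ℝ)..t, δ i * Xn s i) - ∫ s in (0:ℝ)..t, δ i * X s i))
            - (Finset.univ.inf' H (fun j => ξn t j - ∫ s in (0:ℝ)..t, δ j * Xn s j)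
              - Finset.univ.inf' H (fun j => ξ t j - ∫ s in (0:ℝ)..t, δ j * X s j)) := by
        ring
      rw [hre]
      have h3 := hξle i
      have h4 := hIdiff i
      have h5 := abs_sub (ξn t i - ξ t i)
        ((∫ s in (0:ℝ)..t, δ i * Xn s i) - ∫ s in (0:ℝ)..t, δ i * X s i)
      have h6 := abs_sub ((ξn t i - ξ t i) -
        ((∫ s in (0:ℝ)..t, δ i * Xn s i) - ∫ s in (0:ℝ)..t, δ i * X s i))
        (Finset.univ.inf' H (fun j => ξn t j - ∫ s in (0:ℝ)..t, δ j * Xn s j)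
          - Finset.univ.inf' H (fun j => ξ t j - ∫ s in (0:ℝ)..t, δ j * X s j))
      linarith
    -- sum up
    have hB0 : 0 ≤ 2 * M + 2 * (c₀ * I) := by positivity
    have hsum : g t ≤ Real.sqrt K * (2 * M + 2 * (c₀ * I)) := by
      have h1 : (∑ i, (Xn t i - X t i) ^ 2) ≤ (K : ℝ) * (2 * M + 2 * (c₀ * I)) ^ 2 := by
        calc (∑ i, (Xn t i - X t i) ^ 2)
            ≤ ∑ _i : Fin K, (2 * M + 2 * (c₀ * I)) ^ 2 := by
              apply Finset.sum_le_sum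
              intro i _
              have := hDb i
              nlinarith [abs_nonneg (Xn t i - X t i), sq_abs (Xn t i - X t i)]
          _ = (K : ℝ) * (2 * M + 2 * (c₀ * I)) ^ 2 := by
              rw [Finset.sum_const, Finset.card_univ, Fintype.card_fin, nsmul_eq_mul]
      calc g t ≤ Real.sqrt ((K : ℝ) * (2 * M + 2 * (c₀ * I)) ^ 2) :=
            Real.sqrt_le_sqrt h1
        _ = Real.sqrt K * (2 * M + 2 * (c₀ * I)) := by
            rw [Real.sqrt_mul (by positivity), Real.sqrt_sq hB0]
    calc g t ≤ Real.sqrt K * (2 * M + 2 * (c₀ * I)) := hsum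
      _ ≤ A * M + A * c₀ * I := by nlinarith
  -- apply Gronwall
  intro t ht
  have := my_gronwall hgcont hg0 (by positivity) (by positivity) hbound t ht
  calc g t ≤ A * M * Real.exp (A * c₀ * t) := this
    _ = A * M * Real.exp ((1 + (K : ℝ)) * Real.sqrt K * c₀ * t) := by rw [hA]
end
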